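/- Let u≥3 be odd, ζ=e^{πi/(6u)}, and K=ℚ(ζ)⊂ℂ. Then every entry 𝒮ᵘ_{λ,λ′} with λ,λ′∈P⁺ᵘ lies in K; there is a unique field automorphism σ of K with σ(ζ)=ζ^{3u+2}; and for all λ,λ′∈P⁺ᵘ: σ(𝒮ᵘ_{λ,λ′}) = (i/(√3·u))·Σ_{w∈S₃}det(w)·e^{−4πi⟨w(λ̄+ρ),λ̄′+ρ⟩/u} = e^{−2πi(j_λ+j_{λ′}−u/3)}·S^{BP}_{λ,λ′}. (The Bershadsky–Polyakov S-matrix is, up to an explicit phase, a Galois conjugate of the level-(u−3) sl₃ WZW S-matrix.) -/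

import Mathlib

noncomputable section

open Complex IntermediateField

/-- The six elements of the Weyl group `S₃` of sl₃ acting on weights in
Dynkin-label coordinates: `id, w₁, w₂, w₁w₂, w₂w₁, w₃`. -/
def wmap (w : Fin 6) (x : ℂ × ℂ) : ℂ × ℂ :=
  ![x, (-x.1, x.1 + x.2), (x.1 + x.2, -x.2), (-x.1 - x.2, x.1),
    (x.2, -x.1 - x.2), (-x.2, -x.1)] w

/-- The signs of the six Weyl group elements. -/
def wdet : Fin 6 → ℤ := ![1, -1, -1, 1, 1, -1]

/-- The normalised invariant bilinear form of sl₃ in Dynkin-label coordinates. -/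
def bform (x y : ℂ × ℂ) : ℂ :=
  (2 * x.1 * y.1 + x.1 * y.2 + x.2 * y.1 + 2 * x.2 * y.2) / 3

/-- The Weyl vector `ρ = (1,1)`. -/
def rho : ℂ × ℂ := (1, 1)

/-- The set `P⁺ᵘ` of triples of nonnegative integers summing to `u-3`. -/
def Pplus (u : ℕ) : Finset (ℕ × ℕ × ℕ) :=
  (Finset.range u ×ˢ Finset.range u ×ˢ Finset.range u).filter
    (fun l => l.1 + l.2.1 + l.2.2 = u - 3)

/-- The finite part `λ̄ = (λ₁,λ₂)` of a triple `λ = (λ₀,λ₁,λ₂)`. -/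
def bar (l : ℕ × ℕ × ℕ) : ℂ × ℂ := ((l.2.1 : ℂ), (l.2.2 : ℂ))

/-- `j_λ = -(λ₁-λ₂)/3`. -/
def jBP (l : ℕ × ℕ × ℕ) : ℂ := -(((l.2.1 : ℂ) - (l.2.2 : ℂ)) / 3)

/-- The level-`(u-3)` sl₃ WZW S-matrix entry `𝒮ᵘ_{λ,λ′}`. -/
def ScalP (u : ℕ) (l l' : ℕ × ℕ × ℕ) : ℂ :=
  (-I / (Real.sqrt 3 * u)) *
    ∑ w : Fin 6, (wdet w : ℂ) *
      exp (-2 * Real.pi * I * bform (wmap w (bar l + rho)) (bar l' + rho) / u)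

/-- The Galois transform `G_{λ,λ′} = (i/(√3·u))·Σ_{w∈S₃}det(w)·e^{-4πi⟨w(λ̄+ρ),λ̄′+ρ⟩/u}`. -/
def Gmat (u : ℕ) (l l' : ℕ × ℕ × ℕ) : ℂ :=
  (I / (Real.sqrt 3 * u)) *
    ∑ w : Fin 6, (wdet w : ℂ) *
      exp (-4 * Real.pi * I * bform (wmap w (bar l + rho)) (bar l' + rho) / u)

/-- The Bershadsky–Polyakov minimal-model S-matrix. -/
def SBP (u : ℕ) (l l' : ℕ × ℕ × ℕ) : ℂ :=
  exp (2 * Real.pi * I * (jBP l + jBP l' - (u : ℂ) / 3)) * Gmat u l l'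

/-- The primitive `12u`-th root of unity `ζ = e^{πi/(6u)}`. -/
def zeta (u : ℕ) : ℂ := exp (Real.pi * I / (6 * u))

/-- The cyclotomic field `K = ℚ(ζ) ⊆ ℂ`. -/
def Kfield (u : ℕ) : IntermediateField ℚ ℂ := ℚ⟮zeta u⟯

/-- `ζ` as an element of `K`. -/
def zetaK (u : ℕ) : Kfield u :=
  ⟨zeta u, IntermediateField.mem_adjoin_simple_self ℚ (zeta u)⟩

/-!
All entries of `𝒮ᵘ` are integral Laurent polynomials in the primitive `12u`-th root of unity `ζ`:
the prefactor `-i/(√3 u)` is `(ζ^{-2u} - ζ^{2u})/(3u)` and each exponential is `ζ^{-4n}` with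
`n = 3⟨w(λ̄+ρ), λ̄′+ρ⟩ ∈ ℤ`. Since `3u+2` is prime to `12u` for odd `u`, `ζ ↦ ζ^{3u+2}` is a Galois
automorphism of `ℚ(ζ)`. It sends `ζ^{2u}` to `ζ^{-2u}`, flipping the sign of `√3·i`, and `ζ^{-4n}` to
`ζ^{-8n}`, doubling the phases; this turns `𝒮ᵘ` into `Gmat`.
-/

open Polynomial

theorem IntermediateField.existsUnique_algEquiv_adjoin_simple_gen_eq {F E : Type*} [Field F]
    [Field E] [Algebra F E] {α : E} (hα : IsIntegral F α) {β : F⟮α⟯}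
    (hβ : aeval β (minpoly F α) = 0) :
    ∃! σ : F⟮α⟯ ≃ₐ[F] F⟮α⟯, σ (AdjoinSimple.gen F α) = β := by
  have : FiniteDimensional F F⟮α⟯ := adjoin.finiteDimensional hα
  let β' : { x // x ∈ (minpoly F α).aroots F⟮α⟯ } :=
    ⟨β, mem_aroots.mpr ⟨minpoly.ne_zero hα, hβ⟩⟩
  let f := (algHomAdjoinIntegralEquiv F hα).symm β'
  have hf : f (AdjoinSimple.gen F α) = β := algHomAdjoinIntegralEquiv_symm_apply_gen F hα β'
  refine ⟨.ofBijective f (Algebra.IsAlgebraic.algHom_bijective f), hf, fun τ hτ => ?_⟩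
  exact AlgEquiv.coe_toAlgHom_injective <| (adjoin.powerBasis hα).algHom_ext (hτ.trans hf.symm)

theorem IsPrimitiveRoot.existsUnique_algEquiv_adjoin_pow {E : Type*} [Field E] [CharZero E]
    {ζ : E} {n k : ℕ} (hζ : IsPrimitiveRoot ζ n) (hn : 0 < n) (hk : k.Coprime n) :
    ∃! σ : ℚ⟮ζ⟯ ≃ₐ[ℚ] ℚ⟮ζ⟯, σ (AdjoinSimple.gen ℚ ζ) = AdjoinSimple.gen ℚ ζ ^ k := by
  refine existsUnique_algEquiv_adjoin_simple_gen_eq ((hζ.isIntegral hn).tower_top) ?_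
  have hmin : minpoly ℚ (AdjoinSimple.gen ℚ ζ ^ k) = minpoly ℚ ζ := by
    rw [← minpoly.algebraMap_eq (algebraMap ℚ⟮ζ⟯ E).injective, map_pow,
      AdjoinSimple.algebraMap_gen, ← cyclotomic_eq_minpoly_rat (hζ.pow_of_coprime k hk) hn,
      cyclotomic_eq_minpoly_rat hζ hn]
  rw [← hmin]
  exact minpoly.aeval _ _

theorem coprime_three_mul_add_two_twelve_mul {u : ℕ} (hu : Odd u) :
    (3 * u + 2).Coprime (12 * u) := by
  have h2 : (3 * u + 2).Coprime 2 :=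
    Nat.coprime_two_right.mpr ((Odd.mul (by decide) hu).add_even even_two)
  have h3 : (3 * u + 2).Coprime 3 := (Nat.coprime_mul_left_add_left 2 3 u).mpr (by decide)
  have hu' : (3 * u + 2).Coprime u :=
    (Nat.coprime_mul_right_add_left 2 u 3).mpr hu.coprime_two_left
  show (3 * u + 2).Coprime (2 ^ 2 * 3 * u)
  exact ((h2.pow_right 2).mul_right h3).mul_right hu'

def wmapInt (w : Fin 6) (x : ℤ × ℤ) : ℤ × ℤ :=
  ![x, (-x.1, x.1 + x.2), (x.1 + x.2, -x.2), (-x.1 - x.2, x.1),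
    (x.2, -x.1 - x.2), (-x.2, -x.1)] w

def bformInt (x y : ℤ × ℤ) : ℤ :=
  2 * x.1 * y.1 + x.1 * y.2 + x.2 * y.1 + 2 * x.2 * y.2

def weylExponent (l l' : ℕ × ℕ × ℕ) (w : Fin 6) : ℤ :=
  bformInt (wmapInt w (l.2.1 + 1, l.2.2 + 1)) (l'.2.1 + 1, l'.2.2 + 1)

theorem intCast_weylExponent (l l' : ℕ × ℕ × ℕ) (w : Fin 6) :
    (weylExponent l l' w : ℂ) = 3 * bform (wmap w (bar l + rho)) (bar l' + rho) := by
  fin_cases w <;> simp [weylExponent, bformInt, wmapInt, bform, wmap, bar, rho] <;> ring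

section Zeta

variable {u : ℕ}

theorem zeta_isPrimitiveRoot (hu : u ≠ 0) : IsPrimitiveRoot (zeta u) (12 * u) := by
  convert Complex.isPrimitiveRoot_exp (12 * u) (by omega) using 2
  rw [zeta]
  push_cast
  ring_nf

theorem zeta_zpow (k : ℤ) : zeta u ^ k = exp (k * (Real.pi * I / (6 * u))) := by
  rw [zeta, ← Complex.exp_int_mul]

theorem zeta_zpow_eq_zpow_of_dvd_sub (hu : u ≠ 0) {a b : ℤ} (h : 12 * (u : ℤ) ∣ a - b) :
    zeta u ^ a = zeta u ^ b := by
  obtain ⟨t, ht⟩ := h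
  rw [← sub_add_cancel a b, ht, show (12 * u * t : ℤ) = (12 * u : ℕ) * t by push_cast; rfl,
    zpow_add₀ ((zeta_isPrimitiveRoot hu).ne_zero (by omega)), zpow_mul, zpow_natCast,
    (zeta_isPrimitiveRoot hu).pow_eq_one, one_zpow, one_mul]

theorem zeta_zpow_mul_weylExponent (hu : u ≠ 0) (k : ℤ) (l l' : ℕ × ℕ × ℕ) (w : Fin 6) :
    zeta u ^ (k * weylExponent l l' w)
      = exp (k * Real.pi * I * bform (wmap w (bar l + rho)) (bar l' + rho) / (2 * u)) := by
  rw [zeta_zpow, Int.cast_mul, intCast_weylExponent]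
  congr 1
  field_simp
  ring

theorem zeta_zpow_sub_div (hu : u ≠ 0) :
    (zeta u ^ (2 * u : ℤ) - zeta u ^ (-(2 * u : ℤ))) / (3 * u) = I / (Real.sqrt 3 * u) := by
  have hsin :
      zeta u ^ (2 * u : ℤ) - zeta u ^ (-(2 * u : ℤ)) = 2 * sin (Real.pi / 3 : ℝ) * I := by
    rw [two_sin, mul_assoc, I_mul_I, mul_neg_one, neg_sub, zeta_zpow, zeta_zpow]
    congr 2 <;> push_cast <;> field_simp <;> ring
  have h3 : ((Real.sqrt 3 : ℝ) : ℂ) ^ 2 = 3 := by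
    rw [← ofReal_pow, Real.sq_sqrt (by norm_num)]
    norm_num
  rw [hsin, ← ofReal_sin, Real.sin_pi_div_three]
  push_cast
  field_simp
  linear_combination h3

end Zeta

def sEntry {R : Type*} [Field R] (u : ℕ) (l l' : ℕ × ℕ × ℕ) (z : R) : R :=
  (z ^ (-(2 * u : ℤ)) - z ^ (2 * u : ℤ)) / (3 * u) *
    ∑ w : Fin 6, (wdet w : R) * z ^ (-4 * weylExponent l l' w)

section SEntry

variable {u : ℕ} (l l' : ℕ × ℕ × ℕ)

theorem map_sEntry {R S F : Type*} [Field R] [Field S] [FunLike F R S] [RingHomClass F R S]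
    (f : F) (z : R) : f (sEntry u l l' z) = sEntry u l l' (f z) := by
  simp only [sEntry, map_mul, map_div₀, map_sub, map_zpow₀, map_sum, map_intCast, map_natCast,
    map_ofNat]

theorem sEntry_zeta (hu : u ≠ 0) : sEntry u l l' (zeta u) = ScalP u l l' := by
  rw [sEntry, ScalP, ← neg_sub, neg_div, zeta_zpow_sub_div hu, neg_div]
  congr 1
  refine Finset.sum_congr rfl fun w _ => ?_
  rw [zeta_zpow_mul_weylExponent hu]
  congr 2
  field_simp
  push_cast
  ring

theorem sEntry_zeta_pow (hu : Odd u) : sEntry u l l' (zeta u ^ (3 * u + 2)) = Gmat u l l' := by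
  have hu0 : u ≠ 0 := hu.pos.ne'
  obtain ⟨k, hk⟩ := hu
  -- `(3u+2)·2u ≡ -2u` and `(3u+2)·4 ≡ 8` modulo `12u`, the first because `u` is odd.
  have hσ : ∀ a b : ℤ, 12 * (u : ℤ) ∣ (3 * u + 2) * a - b →
      (zeta u ^ (3 * u + 2)) ^ a = zeta u ^ b := fun a b h => by
    rw [← zpow_natCast, ← zpow_mul]
    exact zeta_zpow_eq_zpow_of_dvd_sub hu0 (by exact_mod_cast h)
  rw [sEntry, Gmat, hσ _ (2 * u) ⟨-(k + 1), by rw [hk]; push_cast; ring⟩,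
    hσ _ (-(2 * u)) ⟨k + 1, by rw [hk]; push_cast; ring⟩, zeta_zpow_sub_div hu0]
  congr 1
  refine Finset.sum_congr rfl fun w _ => ?_
  rw [hσ _ (-8 * weylExponent l l' w) ⟨-weylExponent l l' w, by ring⟩,
    zeta_zpow_mul_weylExponent hu0]
  congr 2
  field_simp
  push_cast
  ring

end SEntry

theorem stmt8_general (u : ℕ) (hodd : Odd u) :
    (∀ l ∈ Pplus u, ∀ l' ∈ Pplus u, ScalP u l l' ∈ Kfield u) ∧
    (∃! σ : Kfield u ≃ₐ[ℚ] Kfield u, σ (zetaK u) = zetaK u ^ (3 * u + 2)) ∧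
    (∀ σ : Kfield u ≃ₐ[ℚ] Kfield u, σ (zetaK u) = zetaK u ^ (3 * u + 2) →
      ∀ l ∈ Pplus u, ∀ l' ∈ Pplus u, ∀ s : Kfield u, (s : ℂ) = ScalP u l l' →
        ((σ s : ℂ) = Gmat u l l' ∧
          Gmat u l l'
            = exp (-2 * Real.pi * I * (jBP l + jBP l' - (u : ℂ) / 3)) * SBP u l l')) := by
  have hu : u ≠ 0 := hodd.pos.ne'
  have hS : ∀ l l', (sEntry u l l' (zetaK u) : ℂ) = ScalP u l l' := fun l l' =>
    (map_sEntry l l' (Kfield u).val _).trans (sEntry_zeta l l' hu)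
  refine ⟨fun l _ l' _ => hS l l' ▸ (sEntry u l l' (zetaK u)).2,
    (zeta_isPrimitiveRoot hu).existsUnique_algEquiv_adjoin_pow (by omega)
      (coprime_three_mul_add_two_twelve_mul hodd), ?_⟩
  intro σ hσ l _ l' _ s hs
  obtain rfl : s = sEntry u l l' (zetaK u) := Subtype.ext (hs.trans (hS l l').symm)
  refine ⟨?_, ?_⟩
  · rw [map_sEntry, hσ, ← sEntry_zeta_pow l l' hodd]
    exact map_sEntry l l' (Kfield u).val _
  · rw [SBP, ← mul_assoc, ← exp_add, neg_mul, neg_mul, neg_mul, neg_add_cancel, exp_zero,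
      one_mul]

/-- For odd `u ≥ 3`: every S-matrix entry `𝒮ᵘ_{λ,λ′}` lies in `K = ℚ(ζ)`;
there is a unique automorphism `σ` of `K` with `σ(ζ) = ζ^{3u+2}`; and
`σ(𝒮ᵘ_{λ,λ′}) = (i/(√3·u))·Σ_{w∈S₃}det(w)·e^{-4πi⟨w(λ̄+ρ),λ̄′+ρ⟩/u}
= e^{-2πi(j_λ+j_{λ′}-u/3)}·S^{BP}_{λ,λ′}`. -/
theorem stmt8 (u : ℕ) (hu : 3 ≤ u) (hodd : Odd u) :
    (∀ l ∈ Pplus u, ∀ l' ∈ Pplus u, ScalP u l l' ∈ Kfield u) ∧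
    (∃! σ : Kfield u ≃ₐ[ℚ] Kfield u, σ (zetaK u) = zetaK u ^ (3 * u + 2)) ∧
    (∀ σ : Kfield u ≃ₐ[ℚ] Kfield u, σ (zetaK u) = zetaK u ^ (3 * u + 2) →
      ∀ l ∈ Pplus u, ∀ l' ∈ Pplus u, ∀ s : Kfield u, (s : ℂ) = ScalP u l l' →
        ((σ s : ℂ) = Gmat u l l' ∧
          Gmat u l l'
            = exp (-2 * Real.pi * I * (jBP l + jBP l' - (u : ℂ) / 3)) * SBP u l l')) :=
  stmt8_general u hodd

end
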